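/- Let I ⊆ R = MvPolynomial (Fin N) ℂ be an M-graded ideal, let J = Ideal.span {g_1, …, g_t} where each g_i is a nonzero M-homogeneous polynomial of degree d_i, assume the grading is pointed, and let m ∈ M. Then D_0^m(I : J) = ∑_{i=1}^t Φ_{g_i}(D_0^{m+d_i}(I)); explicitly, an M-homogeneous polynomial q of degree m satisfies λ_q(f) = 0 for all f in the ideal quotient I : J if and only if q = q_1 + ⋯ + q_t where for each i there exists an M-homogeneous p_i of degree m + d_i with λ_{p_i} vanishing on I and λ_{q_i}(f) = λ_{p_i}(g_i·f) for all f ∈ R. -/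

import Mathlib

open MvPolynomial

/-- The Macaulay pairing `λ_p(f) = ∑_α coeff(α,p) * coeff(α,f)`, as a linear functional. -/
noncomputable def lam {N : ℕ} (p : MvPolynomial (Fin N) ℂ) :
    MvPolynomial (Fin N) ℂ →ₗ[ℂ] ℂ where
  toFun f := ∑ α ∈ p.support, coeff α p * coeff α f
  map_add' f g := by simp [mul_add, Finset.sum_add_distrib]
  map_smul' c f := by
    simp [MvPolynomial.coeff_smul, Finset.mul_sum, mul_left_comm]

/-- An ideal is `M`-graded if it is generated by a set of `M`-homogeneous polynomials. -/
def IsMGraded {N : ℕ} {M : Type*} [AddCommGroup M] (w : Fin N → M)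
    (I : Ideal (MvPolynomial (Fin N) ℂ)) : Prop :=
  ∃ S : Set (MvPolynomial (Fin N) ℂ),
    (∀ s ∈ S, ∃ m : M, s.IsWeightedHomogeneous w m) ∧ I = Ideal.span S

/-! On each weight space `V_n` (finite-dimensional because the grading is pointed) the pairing
`λ` is symmetric and nondegenerate, the monomials being a self-dual basis; hence every subspace of
`V_n` is its own double orthogonal. The functional `f ↦ λ_p(g·f)` is `λ` of the explicit polynomial
`contract g p = ∑_β g_β · (p / x^β)`, of degree `n` when `g` has degree `e` and `p` degree `n + e`.

If `y ∈ V_m` is orthogonal to every `contract g_i p` with `p ∈ D_0^{m+d_i}(I)`, then `g_i y` is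
orthogonal to `(I ∩ V_{m+d_i})^⊥`, which equals `D_0^{m+d_i}(I)` because `I` is graded; so
`g_i y ∈ I` for all `i`, i.e. `y ∈ I : J`. Thus `D_0^m(I : J)` is orthogonal to the orthogonal of
`∑_i Φ_{g_i}(D_0^{m+d_i}(I))` and so lies in it. The reverse inclusion is immediate from
`λ_{contract g p}(f) = λ_p(g·f)`. -/

section

variable {N : ℕ}

section Pairing

theorem lam_apply (p f : MvPolynomial (Fin N) ℂ) :
    lam p f = ∑ α ∈ p.support, coeff α p * coeff α f := rfl

theorem lam_eq_sum_of_support_subset (p f : MvPolynomial (Fin N) ℂ)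
    {s : Finset (Fin N →₀ ℕ)} (hs : p.support ⊆ s) :
    lam p f = ∑ α ∈ s, coeff α p * coeff α f :=
  Finset.sum_subset hs fun α _ hα => by rw [notMem_support_iff.mp hα, zero_mul]

theorem lam_comm (p f : MvPolynomial (Fin N) ℂ) : lam p f = lam f p := by
  rw [lam_eq_sum_of_support_subset p f (Finset.subset_union_left (s₂ := f.support)),
    lam_eq_sum_of_support_subset f p (Finset.subset_union_right (s₁ := p.support))]
  simp only [mul_comm]

theorem lam_add_left (p q f : MvPolynomial (Fin N) ℂ) : lam (p + q) f = lam p f + lam q f := by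
  rw [lam_eq_sum_of_support_subset (p + q) f support_add,
    lam_eq_sum_of_support_subset p f Finset.subset_union_left,
    lam_eq_sum_of_support_subset q f Finset.subset_union_right, ← Finset.sum_add_distrib]
  simp only [coeff_add, add_mul]

theorem lam_smul_left (c : ℂ) (p f : MvPolynomial (Fin N) ℂ) : lam (c • p) f = c * lam p f := by
  rw [lam_eq_sum_of_support_subset (c • p) f support_smul, lam_apply, Finset.mul_sum]
  simp only [coeff_smul, smul_eq_mul, mul_assoc]

noncomputable def lamForm : LinearMap.BilinForm ℂ (MvPolynomial (Fin N) ℂ) :=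
  LinearMap.mk₂ ℂ (fun p f => lam p f) lam_add_left lam_smul_left
    (fun p => map_add (lam p)) (fun c p => map_smul (lam p) c)

@[simp]
theorem lamForm_apply (p f : MvPolynomial (Fin N) ℂ) : lamForm p f = lam p f := rfl

theorem lamForm_isSymm : (lamForm (N := N)).IsSymm := ⟨lam_comm⟩

theorem lam_monomial (q : MvPolynomial (Fin N) ℂ) (α : Fin N →₀ ℕ) (c : ℂ) :
    lam q (monomial α c) = coeff α q * c := by
  rw [lam_comm, lam_eq_sum_of_support_subset _ _ support_monomial_subset, Finset.sum_singleton,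
    coeff_monomial, if_pos rfl, mul_comm]

theorem lam_injective : Function.Injective (lam (N := N)) := fun p q h => by
  ext α
  simpa [lam_monomial] using LinearMap.congr_fun h (monomial α 1)

end Pairing

theorem MvPolynomial.finite_weightedHomogeneousSubmodule {σ R M : Type*} [CommSemiring R]
    [AddCommMonoid M] (w : σ → M) {n : M} (h : {α : σ →₀ ℕ | Finsupp.weight w α = n}.Finite) :
    Module.Finite R (weightedHomogeneousSubmodule R w n) := by
  rw [weightedHomogeneousSubmodule_eq_finsupp_supported]
  have := h.to_subtype
  exact Module.Finite.of_basis (basisRestrictSupport R _)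

theorem MvPolynomial.IsWeightedHomogeneous.divMonomial {σ R M : Type*} [CommSemiring R]
    [AddCancelCommMonoid M] {w : σ → M} {p : MvPolynomial σ R} {β : σ →₀ ℕ} {n : M}
    (hp : p.IsWeightedHomogeneous w (n + Finsupp.weight w β)) :
    (p.divMonomial β).IsWeightedHomogeneous w n := fun γ hγ => by
  have h := hp hγ
  rw [map_add, add_comm] at h
  exact add_right_cancel h

section Homogeneous

variable {M : Type*} [AddCommMonoid M] {w : Fin N → M}

theorem lam_weightedHomogeneousComponent {p : MvPolynomial (Fin N) ℂ} {n : M}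
    (hp : p.IsWeightedHomogeneous w n) (f : MvPolynomial (Fin N) ℂ) :
    lam p (weightedHomogeneousComponent w n f) = lam p f := by
  classical
  refine Finset.sum_congr rfl fun α hα => ?_
  rw [coeff_weightedHomogeneousComponent, if_pos (hp (mem_support_iff.mp hα))]

theorem lamForm_restrict_nondegenerate (w : Fin N → M) (n : M) :
    (lamForm.restrict (weightedHomogeneousSubmodule ℂ w n)).Nondegenerate := by
  refine (lamForm_isSymm.restrict _).isRefl.nondegenerate_iff_separatingLeft.mpr fun x hx => ?_
  ext α
  by_cases hα : Finsupp.weight w α = n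
  · simpa [lam_monomial] using hx ⟨monomial α 1, isWeightedHomogeneous_monomial _ _ _ hα⟩
  · by_contra h
    exact hα (x.2 h)

theorem mem_of_lam_orthogonal_orthogonal {n : M}
    [FiniteDimensional ℂ (weightedHomogeneousSubmodule ℂ w n)]
    {U : Submodule ℂ (MvPolynomial (Fin N) ℂ)} (hU : U ≤ weightedHomogeneousSubmodule ℂ w n)
    {x : MvPolynomial (Fin N) ℂ} (hx : x.IsWeightedHomogeneous w n)
    (h : ∀ y : MvPolynomial (Fin N) ℂ, y.IsWeightedHomogeneous w n →
      (∀ u ∈ U, lam u y = 0) → lam x y = 0) :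
    x ∈ U := by
  set V := weightedHomogeneousSubmodule ℂ w n
  have hperp := (lamForm.restrict V).orthogonal_orthogonal (lamForm_restrict_nondegenerate w n)
    (lamForm_isSymm.restrict V).isRefl (U.comap V.subtype)
  suffices (⟨x, hx⟩ : V) ∈ U.comap V.subtype from this
  rw [← hperp, LinearMap.BilinForm.mem_orthogonal_iff]
  intro y hy
  change lam y x = 0
  rw [lam_comm]
  exact h y y.2 fun u hu => hy ⟨u, hU hu⟩ hu

end Homogeneous

noncomputable def contract (g : MvPolynomial (Fin N) ℂ) :
    MvPolynomial (Fin N) ℂ →ₗ[ℂ] MvPolynomial (Fin N) ℂ where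
  toFun p := ∑ β ∈ g.support, coeff β g • p.divMonomial β
  map_add' p q := by simp only [add_divMonomial, smul_add, Finset.sum_add_distrib]
  map_smul' c p := by ext; simp [coeff_sum, Finset.mul_sum, mul_left_comm]

theorem contract_apply (g p : MvPolynomial (Fin N) ℂ) :
    contract g p = ∑ β ∈ g.support, coeff β g • p.divMonomial β := rfl

theorem lam_divMonomial (p f : MvPolynomial (Fin N) ℂ) (β : Fin N →₀ ℕ) :
    lam (p.divMonomial β) f = lam p (monomial β 1 * f) := by
  induction f using MvPolynomial.induction_on' with
  | monomial γ c => rw [monomial_mul, one_mul, lam_monomial, lam_monomial, coeff_divMonomial]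
  | add f₁ f₂ h₁ h₂ => rw [mul_add, map_add, map_add, h₁, h₂]

theorem lam_contract (g p f : MvPolynomial (Fin N) ℂ) : lam (contract g p) f = lam p (g * f) :=
  calc lam (contract g p) f = ∑ β ∈ g.support, coeff β g * lam (p.divMonomial β) f := by
        simp [contract_apply, ← lamForm_apply]
    _ = ∑ β ∈ g.support, lam p (monomial β (coeff β g) * f) := by
        refine Finset.sum_congr rfl fun β _ => ?_
        rw [lam_divMonomial, ← smul_eq_mul, ← map_smul, ← smul_mul_assoc, smul_monomial,
          smul_eq_mul, mul_one]
    _ = lam p (g * f) := by rw [← map_sum, ← Finset.sum_mul, ← g.as_sum]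

theorem forall_lam_eq_lam_mul_iff (g p q : MvPolynomial (Fin N) ℂ) :
    (∀ f, lam q f = lam p (g * f)) ↔ contract g p = q := by
  simp_rw [← lam_contract, ← LinearMap.ext_iff, lam_injective.eq_iff, eq_comm]

theorem MvPolynomial.IsWeightedHomogeneous.contract {M : Type*} [AddCancelCommMonoid M]
    {w : Fin N → M} {g p : MvPolynomial (Fin N) ℂ} {e n : M} (hg : g.IsWeightedHomogeneous w e)
    (hp : p.IsWeightedHomogeneous w (n + e)) : (contract g p).IsWeightedHomogeneous w n := by
  refine Submodule.sum_mem (weightedHomogeneousSubmodule ℂ w n) fun β hβ =>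
    Submodule.smul_mem _ _ ?_
  have hβe : Finsupp.weight w β = e := hg (mem_support_iff.mp hβ)
  exact IsWeightedHomogeneous.divMonomial (by rwa [hβe])

section Graded

variable {M : Type*} [AddCommGroup M] {w : Fin N → M} {I : Ideal (MvPolynomial (Fin N) ℂ)}

theorem IsMGraded.weightedHomogeneousComponent_mem (hI : IsMGraded w I)
    {f : MvPolynomial (Fin N) ℂ} (hf : f ∈ I) (n : M) : weightedHomogeneousComponent w n f ∈ I := by
  classical
  let := weightedGradedAlgebra ℂ w
  obtain ⟨S, hS, rfl⟩ := hI
  exact weightedHomogeneousComponent_mem_of_mem ℂ w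
    (Ideal.homogeneous_span (weightedHomogeneousSubmodule ℂ w) S hS) hf n

/-- The space `D_0^n(K)`. -/
noncomputable def dualSpace (w : Fin N → M) (n : M) (K : Set (MvPolynomial (Fin N) ℂ)) :
    Submodule ℂ (MvPolynomial (Fin N) ℂ) :=
  weightedHomogeneousSubmodule ℂ w n ⊓ ⨅ f ∈ K, LinearMap.ker (lamForm.flip f)

theorem mem_dualSpace {n : M} {K : Set (MvPolynomial (Fin N) ℂ)} {p : MvPolynomial (Fin N) ℂ} :
    p ∈ dualSpace w n K ↔ p.IsWeightedHomogeneous w n ∧ ∀ f ∈ K, lam p f = 0 := by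
  simp [dualSpace, Submodule.mem_iInf]

theorem IsMGraded.mem_dualSpace_of_forall_lam_eq_zero (hI : IsMGraded w I) {n : M}
    {x : MvPolynomial (Fin N) ℂ} (hx : x.IsWeightedHomogeneous w n)
    (h : ∀ u ∈ I, u.IsWeightedHomogeneous w n → lam u x = 0) : x ∈ dualSpace w n I := by
  refine mem_dualSpace.2 ⟨hx, fun f hf => ?_⟩
  rw [← lam_weightedHomogeneousComponent hx, lam_comm]
  exact h _ (hI.weightedHomogeneousComponent_mem hf n)
    (weightedHomogeneousComponent_isWeightedHomogeneous n f)

theorem IsMGraded.mul_mem_of_forall_lam_contract_eq_zero (hI : IsMGraded w I) {n e : M}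
    [FiniteDimensional ℂ (weightedHomogeneousSubmodule ℂ w (n + e))]
    {g y : MvPolynomial (Fin N) ℂ} (hg : g.IsWeightedHomogeneous w e)
    (hy : y.IsWeightedHomogeneous w n)
    (h : ∀ x ∈ dualSpace w (n + e) I, lam (contract g x) y = 0) : g * y ∈ I := by
  have hgy : (g * y).IsWeightedHomogeneous w (n + e) := add_comm e n ▸ hg.mul hy
  suffices g * y ∈ I.restrictScalars ℂ ⊓ weightedHomogeneousSubmodule ℂ w (n + e) from this.1
  refine mem_of_lam_orthogonal_orthogonal inf_le_right hgy fun x hx hxI => ?_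
  rw [lam_comm, ← lam_contract]
  exact h x (hI.mem_dualSpace_of_forall_lam_eq_zero hx fun u hu hu' => hxI u ⟨hu, hu'⟩)

theorem map_contract_dualSpace_le {K : Ideal (MvPolynomial (Fin N) ℂ)}
    {S : Set (MvPolynomial (Fin N) ℂ)} {g : MvPolynomial (Fin N) ℂ} (hgS : g ∈ S) {e : M}
    (hg : g.IsWeightedHomogeneous w e) (n : M) :
    (dualSpace w (n + e) K).map (contract g) ≤ dualSpace w n (K.colon S) := by
  refine Submodule.map_le_iff_le_comap.2 fun p hp => ?_
  rw [Submodule.mem_comap, mem_dualSpace] at *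
  refine ⟨hg.contract hp.1, fun f hf => ?_⟩
  rw [lam_contract, mul_comm]
  exact hp.2 _ (Submodule.mem_colon.1 hf g hgS)

theorem IsMGraded.dualSpace_colon_span_eq (hI : IsMGraded w I) {ι : Type*}
    (g : ι → MvPolynomial (Fin N) ℂ) (d : ι → M) (hg : ∀ i, (g i).IsWeightedHomogeneous w (d i))
    (m : M) [FiniteDimensional ℂ (weightedHomogeneousSubmodule ℂ w m)]
    [∀ i, FiniteDimensional ℂ (weightedHomogeneousSubmodule ℂ w (m + d i))] :
    dualSpace w m (I.colon (Ideal.span (Set.range g))) =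
      ⨆ i, (dualSpace w (m + d i) I).map (contract (g i)) := by
  rw [Ideal.colon_span]
  have hle : ⨆ i, (dualSpace w (m + d i) I).map (contract (g i)) ≤
      dualSpace w m (I.colon (Set.range g)) :=
    iSup_le fun i => map_contract_dualSpace_le (Set.mem_range_self i) (hg i) m
  refine le_antisymm (fun q hq => ?_) hle
  rw [mem_dualSpace] at hq
  refine mem_of_lam_orthogonal_orthogonal (hle.trans inf_le_left) hq.1 fun y hy hyT => ?_
  refine hq.2 y (Submodule.mem_colon.2 ?_)
  rintro _ ⟨i, rfl⟩
  rw [smul_eq_mul, mul_comm]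
  exact hI.mul_mem_of_forall_lam_contract_eq_zero (hg i) hy fun x hx =>
    hyT _ (Submodule.mem_iSup_of_mem i (Submodule.mem_map_of_mem hx))

end Graded

theorem mem_iSup_map_contract_iff {ι : Type*} [Fintype ι] (g : ι → MvPolynomial (Fin N) ℂ)
    (D : ι → Submodule ℂ (MvPolynomial (Fin N) ℂ)) (q : MvPolynomial (Fin N) ℂ) :
    q ∈ ⨆ i, (D i).map (contract (g i)) ↔ ∃ qs : ι → MvPolynomial (Fin N) ℂ, q = ∑ i, qs i ∧
      ∀ i, ∃ p ∈ D i, ∀ f, lam (qs i) f = lam p (g i * f) := by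
  rw [show ⨆ i, (D i).map (contract (g i)) = ⨆ i ∈ Finset.univ, (D i).map (contract (g i)) by
    simp, Submodule.mem_iSup_finset_iff_exists_sum]
  simp_rw [forall_lam_eq_lam_mul_iff]
  constructor
  · rintro ⟨μ, rfl⟩
    exact ⟨fun i => μ i, rfl, fun i => (μ i).2⟩
  · rintro ⟨qs, rfl, h⟩
    choose p hp hqs using h
    exact ⟨fun i => ⟨qs i, hqs i ▸ Submodule.mem_map_of_mem (hp i)⟩, rfl⟩

end

theorem dualSpace_colon_ideal_general {N t : ℕ} {M : Type*} [AddCommGroup M] (w : Fin N → M)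
    (hpointed : ∀ m : M, {α : Fin N →₀ ℕ | Finsupp.weight w α = m}.Finite)
    (I : Ideal (MvPolynomial (Fin N) ℂ)) (hI : IsMGraded w I)
    (g : Fin t → MvPolynomial (Fin N) ℂ) (d : Fin t → M)
    (hg : ∀ i, (g i).IsWeightedHomogeneous w (d i))
    (J : Ideal (MvPolynomial (Fin N) ℂ)) (hJ : J = Ideal.span (Set.range g))
    (m : M) (q : MvPolynomial (Fin N) ℂ) (hq : q.IsWeightedHomogeneous w m) :
    (∀ f ∈ I.colon J, lam q f = 0) ↔
      ∃ qs : Fin t → MvPolynomial (Fin N) ℂ, q = ∑ i, qs i ∧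
        ∀ i, ∃ p : MvPolynomial (Fin N) ℂ, p.IsWeightedHomogeneous w (m + d i) ∧
          (∀ f ∈ I, lam p f = 0) ∧
          ∀ f : MvPolynomial (Fin N) ℂ, lam (qs i) f = lam p (g i * f) := by
  subst hJ
  have (n : M) : FiniteDimensional ℂ (weightedHomogeneousSubmodule ℂ w n) :=
    finite_weightedHomogeneousSubmodule w (hpointed n)
  calc (∀ f ∈ I.colon (Ideal.span (Set.range g)), lam q f = 0)
      ↔ q ∈ dualSpace w m (I.colon (Ideal.span (Set.range g))) := by simp [mem_dualSpace, hq]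
    _ ↔ q ∈ ⨆ i, (dualSpace w (m + d i) I).map (contract (g i)) := by
      rw [hI.dualSpace_colon_span_eq g d hg m]
    _ ↔ _ := by simp only [mem_iSup_map_contract_iff, mem_dualSpace, SetLike.mem_coe, and_assoc]

/-- **Thm. 4.1(2), explicit form**: for a pointed `M`-grading, an `M`-graded ideal `I`,
and `J = ⟨g₁,…,g_t⟩` with each `g_i` nonzero `M`-homogeneous of degree `d_i`,
`D_0^m(I : J) = ∑_i Φ_{g_i}(D_0^{m+d_i}(I))`: an `M`-homogeneous `q` of degree `m`
satisfies `λ_q(f) = 0` for all `f ∈ I : J` iff `q = q₁ + ⋯ + q_t` where for each `i`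
there is an `M`-homogeneous `p_i` of degree `m + d_i` with `λ_{p_i}` vanishing on `I`
and `λ_{q_i}(f) = λ_{p_i}(g_i·f)` for all `f`. -/
theorem dualSpace_colon_ideal {N t : ℕ} {M : Type*} [AddCommGroup M] (w : Fin N → M)
    (hpointed : ∀ m : M, {α : Fin N →₀ ℕ | Finsupp.weight w α = m}.Finite)
    (I : Ideal (MvPolynomial (Fin N) ℂ)) (hI : IsMGraded w I)
    (g : Fin t → MvPolynomial (Fin N) ℂ) (d : Fin t → M)
    (hg0 : ∀ i, g i ≠ 0) (hg : ∀ i, (g i).IsWeightedHomogeneous w (d i))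
    (J : Ideal (MvPolynomial (Fin N) ℂ)) (hJ : J = Ideal.span (Set.range g))
    (m : M) (q : MvPolynomial (Fin N) ℂ) (hq : q.IsWeightedHomogeneous w m) :
    (∀ f ∈ I.colon J, lam q f = 0) ↔
      ∃ qs : Fin t → MvPolynomial (Fin N) ℂ, q = ∑ i, qs i ∧
        ∀ i, ∃ p : MvPolynomial (Fin N) ℂ, p.IsWeightedHomogeneous w (m + d i) ∧
          (∀ f ∈ I, lam p f = 0) ∧
          ∀ f : MvPolynomial (Fin N) ℂ, lam (qs i) f = lam p (g i * f) :=
  dualSpace_colon_ideal_general w hpointed I hI g d hg J hJ m q hq
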